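/- (Uniqueness for perpetuities, used in the proof) Let (A,B) be a pair of random variables with A taking values in [0,1), P(A=1) < 1, E[log A] < 0 (interpreting log 0 = -∞), and E[log^+ |B|] < ∞. Then the distributional equation M =_d A M + B, where M is independent of (A,B), has at most one solution in distribution. -/

import Mathlib

/-!
For two solutions `ν₁, ν₂`, conditioning on `(A, B)` gives `φᵢ(t) = E[φᵢ(A t) e^{i t B}]` for
their characteristic functions, so `h = ‖φ₁ - φ₂‖` satisfies `h(t) ≤ E[h(A t)]`. As `h` is
bounded, continuous and vanishes at `0`, for every `ε > 0` there is `c` with `h(t) ≤ ε + c |t|`;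
feeding this bound into `h(t) ≤ E[h(A t)]` multiplies `c` by `E|A| < 1`, so in the limit
`h ≤ ε`. Hence `φ₁ = φ₂` and `ν₁ = ν₂`.
-/

open Filter Set MeasureTheory ProbabilityTheory
open scoped ENNReal NNReal Topology

/-- `ν` is a solution in distribution of the perpetuity equation `M =_d A M + B`
with `M` independent of `(A,B)`, where `(A,B)` has the prescribed law. -/
def IsPerpetuitySolution {Ω : Type*} [MeasurableSpace Ω] (μ : Measure Ω)
    (A B : Ω → ℝ) (ν : Measure ℝ) : Prop :=
  ∃ (Ω' : Type) (_ : MeasurableSpace Ω') (μ' : Measure Ω'),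
    IsProbabilityMeasure μ' ∧
    ∃ (A' B' M : Ω' → ℝ),
      Measurable A' ∧ Measurable B' ∧ Measurable M ∧
      Measure.map (fun ω => (A' ω, B' ω)) μ' = Measure.map (fun ω => (A ω, B ω)) μ ∧
      Measure.map M μ' = ν ∧
      IndepFun M (fun ω => (A' ω, B' ω)) μ' ∧
      Measure.map (fun ω => A' ω * M ω + B' ω) μ' = ν

section Contraction

variable {Ω : Type*} [MeasurableSpace Ω] {μ : Measure Ω} [IsProbabilityMeasure μ]

lemma integral_lt_of_forall_lt {f : Ω → ℝ} (hf : Integrable f μ) {c : ℝ} (hfc : ∀ ω, f ω < c) :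
    ∫ ω, f ω ∂μ < c := by
  have hpos : 0 < ∫ ω, (c - f ω) ∂μ := by
    rw [integral_pos_iff_support_of_nonneg (fun ω => sub_nonneg.mpr (hfc ω).le)
      ((integrable_const c).sub hf)]
    have : Function.support (fun ω => c - f ω) = univ :=
      eq_univ_of_forall fun ω => sub_ne_zero.mpr (hfc ω).ne'
    simp [this]
  rw [integral_sub (integrable_const c) hf, integral_const, probReal_univ, one_smul] at hpos
  linarith

variable {A : Ω → ℝ} {h : ℝ → ℝ} {C : ℝ}

lemma le_add_mul_pow_of_le_integral_comp_mul (hh : Continuous h) (hC : ∀ t, |h t| ≤ C)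
    (hA : Integrable A μ) (hle : ∀ t, h t ≤ ∫ ω, h (A ω * t) ∂μ)
    {ε η : ℝ} (hε : 0 ≤ ε) (hη : 0 < η) (hεη : ∀ s, |s| < η → h s ≤ ε) (n : ℕ) (t : ℝ) :
    h t ≤ ε + C / η * (∫ ω, |A ω| ∂μ) ^ n * |t| := by
  have hC0 : 0 ≤ C := (abs_nonneg _).trans (hC 0)
  induction n generalizing t with
  | zero =>
    rcases lt_or_ge |t| η with ht | ht
    · have : 0 ≤ C / η * |t| := by positivity
      simpa using (hεη t ht).trans (le_add_of_nonneg_right this)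
    · have : C ≤ C / η * |t| := by
        rw [div_mul_eq_mul_div, le_div_iff₀ hη]
        exact mul_le_mul_of_nonneg_left ht hC0
      simpa using (le_abs_self _).trans ((hC t).trans this) |>.trans (le_add_of_nonneg_left hε)
  | succ n ih =>
    set K := C / η * (∫ ω, |A ω| ∂μ) ^ n
    have hcomp : Integrable (fun ω => h (A ω * t)) μ :=
      .of_bound (hh.comp_aestronglyMeasurable (hA.aestronglyMeasurable.mul_const t)) C
        (ae_of_all _ fun ω => hC _)
    have hbound : Integrable (fun ω => ε + K * |t| * |A ω|) μ :=
      (integrable_const ε).add (hA.abs.const_mul _)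
    calc h t ≤ ∫ ω, h (A ω * t) ∂μ := hle t
      _ ≤ ∫ ω, (ε + K * |t| * |A ω|) ∂μ := integral_mono hcomp hbound fun ω => by
          simpa [abs_mul, mul_comm, mul_left_comm, mul_assoc] using ih (A ω * t)
      _ = ε + C / η * (∫ ω, |A ω| ∂μ) ^ (n + 1) * |t| := by
          rw [integral_add (integrable_const ε) (hA.abs.const_mul _), integral_const_mul,
            integral_const, probReal_univ, one_smul, pow_succ]
          ring

lemma nonpos_of_le_integral_comp_mul (hh : Continuous h) (h0 : h 0 = 0) (hC : ∀ t, |h t| ≤ C)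
    (hA : Integrable A μ) (hA1 : ∫ ω, |A ω| ∂μ < 1) (hle : ∀ t, h t ≤ ∫ ω, h (A ω * t) ∂μ)
    (t : ℝ) : h t ≤ 0 := by
  refine le_of_forall_pos_le_add fun ε hε => ?_
  obtain ⟨η, hη, hεη⟩ := Metric.continuousAt_iff.mp hh.continuousAt ε hε
  have hsmall (s : ℝ) (hs : |s| < η) : h s ≤ ε := by
    have := hεη (x := s) (by rwa [Real.dist_eq, sub_zero])
    rw [h0, Real.dist_eq, sub_zero] at this
    exact (le_abs_self _).trans this.le
  have hlim : Tendsto (fun n : ℕ => ε + C / η * (∫ ω, |A ω| ∂μ) ^ n * |t|) atTop (𝓝 ε) := by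
    have := tendsto_pow_atTop_nhds_zero_of_lt_one (integral_nonneg fun ω => abs_nonneg (A ω)) hA1
    simpa using ((this.const_mul (C / η)).mul_const |t|).const_add ε
  simpa using ge_of_tendsto' hlim fun n =>
    le_add_mul_pow_of_le_integral_comp_mul hh hC hA hle hε.le hη hsmall n t

end Contraction

namespace IsPerpetuitySolution

variable {Ω : Type*} [MeasurableSpace Ω] {μ : Measure Ω} {A B : Ω → ℝ} {ν : Measure ℝ}

lemma map_prod_eq (h : IsPerpetuitySolution μ A B ν) :
    (ν.prod (μ.map fun ω => (A ω, B ω))).map (fun p => p.2.1 * p.1 + p.2.2) = ν := by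
  obtain ⟨Ω', _, μ', _, A', B', M, hA', hB', hM, hAB, hMν, hind, hsol⟩ := h
  calc (ν.prod (μ.map fun ω => (A ω, B ω))).map (fun p => p.2.1 * p.1 + p.2.2)
      = ((μ'.map M).prod (μ'.map fun ω => (A' ω, B' ω))).map
          (fun p => p.2.1 * p.1 + p.2.2) := by rw [hMν, hAB]
    _ = (μ'.map fun ω => (M ω, (A' ω, B' ω))).map (fun p => p.2.1 * p.1 + p.2.2) := by
      rw [(indepFun_iff_map_prod_eq_prod_map_map hM.aemeasurable
        (hA'.prodMk hB').aemeasurable).mp hind]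
    _ = ν := by
      rw [Measure.map_map (by fun_prop) (by fun_prop)]
      exact hsol

lemma charFun_eq [IsProbabilityMeasure μ] [IsFiniteMeasure ν] (hA : Measurable A)
    (hB : Measurable B) (h : IsPerpetuitySolution μ A B ν) (t : ℝ) :
    charFun ν t = ∫ ω, charFun ν (A ω * t) * Complex.exp (t * B ω * Complex.I) ∂μ := by
  set κ := μ.map fun ω => (A ω, B ω)
  have : IsProbabilityMeasure κ := Measure.isProbabilityMeasure_map (hA.prodMk hB).aemeasurable
  have hint : Integrable (fun p : ℝ × ℝ × ℝ =>
      Complex.exp ((t * (p.2.1 * p.1 + p.2.2) : ℝ) * Complex.I)) (ν.prod κ) :=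
    .of_bound (by fun_prop) 1 (ae_of_all _ fun p => (Complex.norm_exp_ofReal_mul_I _).le)
  calc charFun ν t
      = ∫ p, Complex.exp ((t * (p.2.1 * p.1 + p.2.2) : ℝ) * Complex.I) ∂(ν.prod κ) := by
        conv_lhs => rw [← h.map_prod_eq]
        rw [charFun_apply_real, integral_map (by fun_prop) (by fun_prop)]
        push_cast
        rfl
    _ = ∫ q, ∫ m, Complex.exp ((t * (q.1 * m + q.2) : ℝ) * Complex.I) ∂ν ∂κ :=
        integral_prod_symm _ hint
    _ = ∫ q, charFun ν (q.1 * t) * Complex.exp (t * q.2 * Complex.I) ∂κ := by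
        congr 1 with q
        rw [charFun_apply_real, ← integral_mul_const]
        congr 1 with m
        rw [← Complex.exp_add]
        push_cast
        ring_nf
    _ = ∫ ω, charFun ν (A ω * t) * Complex.exp (t * B ω * Complex.I) ∂μ :=
        integral_map (hA.prodMk hB).aemeasurable (by fun_prop)

lemma norm_charFun_sub_le [IsProbabilityMeasure μ] {ν₁ ν₂ : Measure ℝ} [IsProbabilityMeasure ν₁]
    [IsProbabilityMeasure ν₂] (hA : Measurable A) (hB : Measurable B)
    (h₁ : IsPerpetuitySolution μ A B ν₁) (h₂ : IsPerpetuitySolution μ A B ν₂) (t : ℝ) :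
    ‖charFun ν₁ t - charFun ν₂ t‖ ≤ ∫ ω, ‖charFun ν₁ (A ω * t) - charFun ν₂ (A ω * t)‖ ∂μ := by
  have hint (ν : Measure ℝ) [IsProbabilityMeasure ν] : Integrable
      (fun ω => charFun ν (A ω * t) * Complex.exp (t * B ω * Complex.I)) μ :=
    .of_bound (by fun_prop) 1 (ae_of_all _ fun ω => by
      rw [norm_mul, ← Complex.ofReal_mul, Complex.norm_exp_ofReal_mul_I, mul_one]
      exact norm_charFun_le_one _)
  rw [h₁.charFun_eq hA hB, h₂.charFun_eq hA hB, ← integral_sub (hint ν₁) (hint ν₂)]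
  refine (norm_integral_le_integral_norm _).trans_eq (integral_congr_ae (ae_of_all _ fun ω => ?_))
  simp only [← sub_mul, norm_mul, ← Complex.ofReal_mul, Complex.norm_exp_ofReal_mul_I, mul_one]

end IsPerpetuitySolution

theorem perpetuity_unique_solution_general
    {Ω : Type*} [MeasurableSpace Ω] (μ : Measure Ω) [IsProbabilityMeasure μ]
    (A B : Ω → ℝ) (hA : Measurable A) (hB : Measurable B)
    (hA01 : ∀ ω, A ω ∈ Set.Ico (0 : ℝ) 1) :
    ∀ ν₁ ν₂ : Measure ℝ, IsProbabilityMeasure ν₁ → IsProbabilityMeasure ν₂ →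
      IsPerpetuitySolution μ A B ν₁ → IsPerpetuitySolution μ A B ν₂ → ν₁ = ν₂ := by
  intro ν₁ ν₂ _ _ h₁ h₂
  have hA_abs (ω : Ω) : |A ω| < 1 := by
    rw [abs_of_nonneg (hA01 ω).1]
    exact (hA01 ω).2
  have hA_int : Integrable A μ :=
    .of_bound hA.aestronglyMeasurable 1 (ae_of_all _ fun ω => (hA_abs ω).le)
  have hD_bdd (t : ℝ) : |‖charFun ν₁ t - charFun ν₂ t‖| ≤ 2 := by
    rw [abs_norm]
    linarith [norm_sub_le (charFun ν₁ t) (charFun ν₂ t), norm_charFun_le_one (μ := ν₁) t,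
      norm_charFun_le_one (μ := ν₂) t]
  refine Measure.ext_of_charFun (funext fun t => ?_)
  have hD : ‖charFun ν₁ t - charFun ν₂ t‖ ≤ 0 :=
    nonpos_of_le_integral_comp_mul (by fun_prop) (by simp) hD_bdd hA_int
      (integral_lt_of_forall_lt hA_int.abs hA_abs) (h₁.norm_charFun_sub_le hA hB h₂) t
  exact sub_eq_zero.mp (norm_le_zero_iff.mp hD)

/-- Uniqueness for perpetuities: if `A ∈ [0,1)`, `P(A = 1) < 1`, `E[log A] < 0`
(with `log 0 = -∞`, i.e. either `P(A=0) > 0` or the integral of `log A` is negative), and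
`E[log⁺ |B|] < ∞`, then the equation `M =_d A M + B`, with `M` independent of `(A,B)`,
has at most one solution in distribution. -/
theorem perpetuity_unique_solution
    {Ω : Type*} [MeasurableSpace Ω] (μ : Measure Ω) [IsProbabilityMeasure μ]
    (A B : Ω → ℝ) (hA : Measurable A) (hB : Measurable B)
    (hA01 : ∀ ω, A ω ∈ Set.Ico (0 : ℝ) 1)
    (hA1 : μ {ω | A ω = 1} < 1)
    (hlogA : 0 < μ {ω | A ω = 0} ∨ ∫ ω, Real.log (A ω) ∂μ < 0)
    (hlogB : ∫⁻ ω, ENNReal.ofReal (Real.log (max |B ω| 1)) ∂μ < ∞) :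
    ∀ ν₁ ν₂ : Measure ℝ, IsProbabilityMeasure ν₁ → IsProbabilityMeasure ν₂ →
      IsPerpetuitySolution μ A B ν₁ → IsPerpetuitySolution μ A B ν₂ → ν₁ = ν₂ :=
  perpetuity_unique_solution_general μ A B hA hB hA01
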